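/- arXiv:1311.0792 — 10 statements merged into one kernel-verified Lean document; each statement's English description precedes it below -/
import Mathlib

section
/- Let U ⊆ ℝ² be a nonempty connected open set and let S be a set of smooth vector fields on U such that for every p ∈ U the vectors {X(p) : X ∈ S} span ℝ². Suppose f₁, f₂ : U → ℝ are smooth, nowhere vanishing, and for every X ∈ S and each j ∈ {1,2} one has X f_j = −f_j · div X on U. Then there exists a nonzero real constant λ with f₁ = λ·f₂ on U. (Hence the symplectic form turning all elements of S into Hamiltonian vector fields is unique up to a nonzero multiplicative constant.) -/
namespace Stmt1

/-- Partial derivative in the x-direction. -/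
noncomputable def pdx (f : ℝ × ℝ → ℝ) (p : ℝ × ℝ) : ℝ := fderiv ℝ f p (1, 0)

/-- Partial derivative in the y-direction. -/
noncomputable def pdy (f : ℝ × ℝ → ℝ) (p : ℝ × ℝ) : ℝ := fderiv ℝ f p (0, 1)

/-- Divergence of a planar vector field. -/
noncomputable def divg (X : ℝ × ℝ → ℝ × ℝ) (p : ℝ × ℝ) : ℝ :=
  pdx (fun q => (X q).1) p + pdy (fun q => (X q).2) p

/-- If a family `S` of smooth vector fields on a nonempty connected open `U ⊆ ℝ²` spans `ℝ²`
at every point, and two smooth nowhere-vanishing functions `f₁, f₂` are common integrating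
factors of all fields in `S`, then `f₁ = λ·f₂` for a nonzero constant `λ`:
the symplectic form is unique up to a nonzero multiplicative constant. -/
theorem stmt_1 (U : Set (ℝ × ℝ)) (hUo : IsOpen U) (hUconn : IsConnected U)
    (S : Set (ℝ × ℝ → ℝ × ℝ)) (hS : ∀ X ∈ S, ContDiffOn ℝ (⊤ : ℕ∞) X U)
    (hspan : ∀ p ∈ U, Submodule.span ℝ ((fun X : ℝ × ℝ → ℝ × ℝ => X p) '' S) = ⊤)
    (f₁ f₂ : ℝ × ℝ → ℝ)
    (hf₁ : ContDiffOn ℝ (⊤ : ℕ∞) f₁ U) (hf₂ : ContDiffOn ℝ (⊤ : ℕ∞) f₂ U)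
    (hf₁0 : ∀ p ∈ U, f₁ p ≠ 0) (hf₂0 : ∀ p ∈ U, f₂ p ≠ 0)
    (hint₁ : ∀ X ∈ S, ∀ p ∈ U,
      (X p).1 * pdx f₁ p + (X p).2 * pdy f₁ p = -(f₁ p * divg X p))
    (hint₂ : ∀ X ∈ S, ∀ p ∈ U,
      (X p).1 * pdx f₂ p + (X p).2 * pdy f₂ p = -(f₂ p * divg X p)) :
    ∃ l : ℝ, l ≠ 0 ∧ ∀ p ∈ U, f₁ p = l * f₂ p := by
  -- differentiability at points of U
  have hd₁ : ∀ p ∈ U, DifferentiableAt ℝ f₁ p := fun p hp =>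
    (hf₁.contDiffAt (hUo.mem_nhds hp)).differentiableAt (by simp)
  have hd₂ : ∀ p ∈ U, DifferentiableAt ℝ f₂ p := fun p hp =>
    (hf₂.contDiffAt (hUo.mem_nhds hp)).differentiableAt (by simp)
  -- key pointwise relation
  have key : ∀ p ∈ U, f₂ p • fderiv ℝ f₁ p = f₁ p • fderiv ℝ f₂ p := by
    intro p hp
    set L : (ℝ × ℝ) →L[ℝ] ℝ := f₂ p • fderiv ℝ f₁ p - f₁ p • fderiv ℝ f₂ p with hL
    have hker : ∀ X ∈ S, L (X p) = 0 := by
      intro X hX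
      have hx1 : fderiv ℝ f₁ p (X p)
          = (X p).1 * pdx f₁ p + (X p).2 * pdy f₁ p := by
        have : X p = (X p).1 • ((1:ℝ),(0:ℝ)) + (X p).2 • ((0:ℝ),(1:ℝ)) := by simp
        rw [this, map_add, map_smul, map_smul]
        simp [pdx, pdy]
      have hx2 : fderiv ℝ f₂ p (X p)
          = (X p).1 * pdx f₂ p + (X p).2 * pdy f₂ p := by
        have : X p = (X p).1 • ((1:ℝ),(0:ℝ)) + (X p).2 • ((0:ℝ),(1:ℝ)) := by simp
        rw [this, map_add, map_smul, map_smul]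
        simp [pdx, pdy]
      have := hint₁ X hX p hp
      have h2 := hint₂ X hX p hp
      simp only [hL, ContinuousLinearMap.sub_apply, ContinuousLinearMap.smul_apply,
        smul_eq_mul, hx1, hx2, this, h2]
      ring
    have hall : ∀ v : ℝ × ℝ, L v = 0 := by
      intro v
      have hv : v ∈ Submodule.span ℝ ((fun X : ℝ × ℝ → ℝ × ℝ => X p) '' S) := by
        rw [hspan p hp]; trivial
      have hle : Submodule.span ℝ ((fun X : ℝ × ℝ → ℝ × ℝ => X p) '' S)
          ≤ LinearMap.ker (L : (ℝ × ℝ) →ₗ[ℝ] ℝ) := by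
        rw [Submodule.span_le]
        rintro _ ⟨X, hX, rfl⟩
        exact hker X hX
      exact hle hv
    have : L = 0 := ContinuousLinearMap.ext fun v => hall v
    rw [hL] at this
    exact sub_eq_zero.mp this
  -- zero derivative of the quotient
  have hg0 : ∀ p ∈ U, HasFDerivAt (fun q => f₁ q / f₂ q) (0 : (ℝ × ℝ) →L[ℝ] ℝ) p := by
    intro p hp
    have hne : f₂ p ≠ 0 := hf₂0 p hp
    have hD₁ := (hd₁ p hp).hasFDerivAt
    have hD₂ := (hd₂ p hp).hasFDerivAt
    have hinv : HasFDerivAt (fun q => (f₂ q)⁻¹)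
        ((-(f₂ p ^ 2)⁻¹) • fderiv ℝ f₂ p) p := by
      have := (hasDerivAt_inv hne).comp_hasFDerivAt p hD₂
      exact this
    have hmul := hD₁.mul hinv
    have hcoef : f₁ p • ((-(f₂ p ^ 2)⁻¹) • fderiv ℝ f₂ p)
        + (f₂ p)⁻¹ • fderiv ℝ f₁ p = 0 := by
      rw [smul_comm, ← key p hp, smul_smul, ← add_smul]
      have hc : -(f₂ p ^ 2)⁻¹ * f₂ p + (f₂ p)⁻¹ = 0 := by
        field_simp
        ring
      rw [hc, zero_smul]
    have hz : f₁ p • (-(f₂ p ^ 2)⁻¹ • fderiv ℝ f₂ p) + (f₂ p)⁻¹ • fderiv ℝ f₁ p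
        = (0 : (ℝ × ℝ) →L[ℝ] ℝ) := hcoef
    have := hz ▸ hmul
    simp only [div_eq_mul_inv]; exact this
  -- local constancy of the quotient
  have hloc : ∀ p ∈ U, ∃ ε > 0, Metric.ball p ε ⊆ U ∧
      ∀ q ∈ Metric.ball p ε, f₁ q / f₂ q = f₁ p / f₂ p := by
    intro p hp
    obtain ⟨ε, hε, hball⟩ := Metric.isOpen_iff.mp hUo p hp
    refine ⟨ε, hε, hball, fun q hq => ?_⟩
    have hdiff : DifferentiableOn ℝ (fun q => f₁ q / f₂ q) (Metric.ball p ε) :=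
      fun z hz => ((hg0 z (hball hz)).differentiableAt).differentiableWithinAt
    have hzero : ∀ z ∈ Metric.ball p ε,
        fderivWithin ℝ (fun q => f₁ q / f₂ q) (Metric.ball p ε) z = 0 := by
      intro z hz
      rw [fderivWithin_of_isOpen Metric.isOpen_ball hz]
      exact (hg0 z (hball hz)).fderiv
    exact (convex_ball p ε).is_const_of_fderivWithin_eq_zero hdiff hzero hq
      (Metric.mem_ball_self hε)
  obtain ⟨p₀, hp₀⟩ := hUconn.nonempty
  set l := f₁ p₀ / f₂ p₀ with hl
  refine ⟨l, div_ne_zero (hf₁0 p₀ hp₀) (hf₂0 p₀ hp₀), ?_⟩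
  have hiff : ∀ q ∈ U, (f₁ q = l * f₂ q ↔ f₁ q / f₂ q = l) := by
    intro q hq
    rw [div_eq_iff (hf₂0 q hq)]
  set V₁ : Set (ℝ × ℝ) := {p | p ∈ U ∧ f₁ p = l * f₂ p} with hV₁
  set V₂ : Set (ℝ × ℝ) := {p | p ∈ U ∧ f₁ p ≠ l * f₂ p} with hV₂
  have hoV₁ : IsOpen V₁ := by
    rw [Metric.isOpen_iff]
    rintro p ⟨hpU, hpe⟩
    obtain ⟨ε, hε, hball, hconst⟩ := hloc p hpU
    refine ⟨ε, hε, fun q hq => ⟨hball hq, ?_⟩⟩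
    have := hconst q hq
    rw [hiff q (hball hq), this]
    exact (hiff p hpU).mp hpe
  have hoV₂ : IsOpen V₂ := by
    rw [Metric.isOpen_iff]
    rintro p ⟨hpU, hpe⟩
    obtain ⟨ε, hε, hball, hconst⟩ := hloc p hpU
    refine ⟨ε, hε, fun q hq => ⟨hball hq, fun hcon => ?_⟩⟩
    apply hpe
    rw [hiff p hpU, ← hconst q hq]
    exact (hiff q (hball hq)).mp hcon
  intro p hp
  by_contra hne
  have h1 : (U ∩ V₁).Nonempty := ⟨p₀, hp₀, hp₀, by
    rw [hiff p₀ hp₀]⟩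
  have h2 : (U ∩ V₂).Nonempty := ⟨p, hp, hp, hne⟩
  have hcover : U ⊆ V₁ ∪ V₂ := by
    intro q hq
    by_cases h : f₁ q = l * f₂ q
    · exact Or.inl ⟨hq, h⟩
    · exact Or.inr ⟨hq, h⟩
  obtain ⟨q, _, ⟨_, hq1⟩, ⟨_, hq2⟩⟩ :=
    hUconn.isPreconnected V₁ V₂ hoV₁ hoV₂ hcover h1 h2
  exact hq2 hq1


end Stmt1
end

section
/- Let U ⊆ ℝ² be open, let X₁,…,X_p and X be smooth vector fields on U, and let f : U → ℝ be smooth and nowhere vanishing with X_i f = −f·div X_i on U for every i = 1,…,p. Suppose U₁ ⊆ U is a dense open subset and there exist smooth functions g₁,…,g_p : U₁ → ℝ such that X(q) = Σᵢ g_i(q)·X_i(q) and div X(q) = Σᵢ g_i(q)·div X_i(q) for all q ∈ U₁. Then Xf = −f·div X holds on all of U, i.e. f is a non-vanishing integrating factor for X on U. -/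
namespace Stmt2

/-- Partial derivative in the x-direction. -/
noncomputable def pdx (f : ℝ × ℝ → ℝ) (p : ℝ × ℝ) : ℝ := fderiv ℝ f p (1, 0)

/-- Partial derivative in the y-direction. -/
noncomputable def pdy (f : ℝ × ℝ → ℝ) (p : ℝ × ℝ) : ℝ := fderiv ℝ f p (0, 1)

/-- Divergence of a planar vector field. -/
noncomputable def divg (X : ℝ × ℝ → ℝ × ℝ) (p : ℝ × ℝ) : ℝ :=
  pdx (fun q => (X q).1) p + pdy (fun q => (X q).2) p

/-- If `f` is a common non-vanishing integrating factor for `X₁,…,X_m` on `U`, and on a dense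
open subset `U₁ ⊆ U` one has `X = Σᵢ gᵢ·Xᵢ` and `div X = Σᵢ gᵢ·div Xᵢ` for smooth `gᵢ`,
then `f` is a non-vanishing integrating factor for `X` on all of `U`. -/
theorem stmt_2 (U U₁ : Set (ℝ × ℝ)) (hUo : IsOpen U) (hU₁o : IsOpen U₁)
    (hU₁U : U₁ ⊆ U) (hdense : U ⊆ closure U₁)
    (m : ℕ) (Xs : Fin m → (ℝ × ℝ → ℝ × ℝ)) (X : ℝ × ℝ → ℝ × ℝ)
    (hXs : ∀ i, ContDiffOn ℝ (⊤ : ℕ∞) (Xs i) U) (hX : ContDiffOn ℝ (⊤ : ℕ∞) X U)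
    (f : ℝ × ℝ → ℝ) (hf : ContDiffOn ℝ (⊤ : ℕ∞) f U) (hf0 : ∀ q ∈ U, f q ≠ 0)
    (hint : ∀ i, ∀ q ∈ U,
      (Xs i q).1 * pdx f q + (Xs i q).2 * pdy f q = -(f q * divg (Xs i) q))
    (g : Fin m → (ℝ × ℝ → ℝ)) (hg : ∀ i, ContDiffOn ℝ (⊤ : ℕ∞) (g i) U₁)
    (hcomb : ∀ q ∈ U₁, X q = ∑ i, g i q • Xs i q)
    (hdiv : ∀ q ∈ U₁, divg X q = ∑ i, g i q * divg (Xs i) q) :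
    ∀ q ∈ U, (X q).1 * pdx f q + (X q).2 * pdy f q = -(f q * divg X q) := by

  -- The function measuring the failure of the integrating-factor identity for `X`.
  set h : ℝ × ℝ → ℝ := fun q =>
    (X q).1 * pdx f q + (X q).2 * pdy f q + f q * divg X q with hh
  -- Step 1: `h` vanishes on `U₁` by linearity.
  have hzero : ∀ q ∈ U₁, h q = 0 := by
    intro q hq
    have h1 : (X q).1 = ∑ i, g i q * (Xs i q).1 := by
      rw [hcomb q hq, Prod.fst_sum]; simp
    have h2 : (X q).2 = ∑ i, g i q * (Xs i q).2 := by
      rw [hcomb q hq, Prod.snd_sum]; simp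
    have key : ∀ i, (Xs i q).1 * pdx f q + (Xs i q).2 * pdy f q
        + f q * divg (Xs i) q = 0 := by
      intro i
      have := hint i q (hU₁U hq)
      linarith
    simp only [hh]
    rw [h1, h2, hdiv q hq, Finset.sum_mul, Finset.sum_mul, Finset.mul_sum,
      ← Finset.sum_add_distrib, ← Finset.sum_add_distrib]
    apply Finset.sum_eq_zero
    intro i _
    linear_combination (g i q) * key i
  -- Step 2: `h` is continuous on `U`.
  have hpdxf : ContinuousOn (pdx f) U := by
    have hc := hf.continuousOn_fderiv_of_isOpen hUo (by simp)
    exact ((ContinuousLinearMap.apply ℝ ℝ ((1, 0) : ℝ × ℝ)).continuous).comp_continuousOn hc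
  have hpdyf : ContinuousOn (pdy f) U := by
    have hc := hf.continuousOn_fderiv_of_isOpen hUo (by simp)
    exact ((ContinuousLinearMap.apply ℝ ℝ ((0, 1) : ℝ × ℝ)).continuous).comp_continuousOn hc
  have hX1 : ContDiffOn ℝ (⊤ : ℕ∞) (fun q => (X q).1) U := contDiff_fst.comp_contDiffOn hX
  have hX2 : ContDiffOn ℝ (⊤ : ℕ∞) (fun q => (X q).2) U := contDiff_snd.comp_contDiffOn hX
  have hdivX : ContinuousOn (divg X) U := by
    have hc1 := hX1.continuousOn_fderiv_of_isOpen hUo (by simp)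
    have hc2 := hX2.continuousOn_fderiv_of_isOpen hUo (by simp)
    exact (((ContinuousLinearMap.apply ℝ ℝ ((1, 0) : ℝ × ℝ)).continuous).comp_continuousOn
      hc1).add (((ContinuousLinearMap.apply ℝ ℝ ((0, 1) : ℝ × ℝ)).continuous).comp_continuousOn hc2)
  have hcont : ContinuousOn h U :=
    (((hX1.continuousOn.mul hpdxf).add (hX2.continuousOn.mul hpdyf)).add
      (hf.continuousOn.mul hdivX))
  -- Step 3: extend vanishing to `U` by density.
  intro q hq
  have hneb : (nhdsWithin q U₁).NeBot :=
    mem_closure_iff_nhdsWithin_neBot.mp (hdense hq)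
  have hca : ContinuousAt h q := hcont.continuousAt (hUo.mem_nhds hq)
  have t1 : Filter.Tendsto h (nhdsWithin q U₁) (nhds (h q)) :=
    hca.tendsto.mono_left nhdsWithin_le_nhds
  have t2 : Filter.Tendsto h (nhdsWithin q U₁) (nhds 0) := by
    refine Filter.Tendsto.congr' ?_ tendsto_const_nhds
    filter_upwards [self_mem_nhdsWithin] with x hx
    exact (hzero x hx).symm
  have hq0 : h q = 0 := tendsto_nhds_unique t1 t2
  simp only [hh] at hq0
  linarith


end Stmt2
end

section
/- Let U ⊆ ℝ² be open, let X₁,…,X_p and X be smooth vector fields on U with div X_i = 0 and X_i f = 0 on U for every i = 1,…,p, where f : U → ℝ is smooth and nowhere vanishing and satisfies Xf = −f·div X on U. Suppose U₁ ⊆ U is a dense open subset and there exist smooth functions g₁,…,g_p : U₁ → ℝ such that X(q) = Σᵢ g_i(q)·X_i(q) for all q ∈ U₁. Then div X = 0 on all of U. (If a Lie algebra of Hamiltonian vector fields with respect to a symplectic form admits a modular generating system of divergence-free vector fields, then every element is divergence free.) -/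
namespace Stmt3

/-- Partial derivative in the x-direction. -/
noncomputable def pdx (f : ℝ × ℝ → ℝ) (p : ℝ × ℝ) : ℝ := fderiv ℝ f p (1, 0)

/-- Partial derivative in the y-direction. -/
noncomputable def pdy (f : ℝ × ℝ → ℝ) (p : ℝ × ℝ) : ℝ := fderiv ℝ f p (0, 1)

/-- Divergence of a planar vector field. -/
noncomputable def divg (X : ℝ × ℝ → ℝ × ℝ) (p : ℝ × ℝ) : ℝ :=
  pdx (fun q => (X q).1) p + pdy (fun q => (X q).2) p

/-- If the vector fields `X₁,…,X_m` are divergence free and annihilate the smooth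
nowhere-vanishing function `f` on `U`, `X` satisfies the integrating-factor condition
`Xf = -f·div X` on `U`, and `X = Σᵢ gᵢ·Xᵢ` on a dense open subset `U₁ ⊆ U`,
then `div X = 0` on all of `U`. -/
theorem stmt_3 (U U₁ : Set (ℝ × ℝ)) (hUo : IsOpen U) (hU₁o : IsOpen U₁)
    (hU₁U : U₁ ⊆ U) (hdense : U ⊆ closure U₁)
    (m : ℕ) (Xs : Fin m → (ℝ × ℝ → ℝ × ℝ)) (X : ℝ × ℝ → ℝ × ℝ)
    (hXs : ∀ i, ContDiffOn ℝ (⊤ : ℕ∞) (Xs i) U) (hX : ContDiffOn ℝ (⊤ : ℕ∞) X U)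
    (f : ℝ × ℝ → ℝ) (hf : ContDiffOn ℝ (⊤ : ℕ∞) f U) (hf0 : ∀ q ∈ U, f q ≠ 0)
    (hdiv0 : ∀ i, ∀ q ∈ U, divg (Xs i) q = 0)
    (hXf0 : ∀ i, ∀ q ∈ U, (Xs i q).1 * pdx f q + (Xs i q).2 * pdy f q = 0)
    (hintX : ∀ q ∈ U, (X q).1 * pdx f q + (X q).2 * pdy f q = -(f q * divg X q))
    (g : Fin m → (ℝ × ℝ → ℝ)) (hg : ∀ i, ContDiffOn ℝ (⊤ : ℕ∞) (g i) U₁)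
    (hcomb : ∀ q ∈ U₁, X q = ∑ i, g i q • Xs i q) :
    ∀ q ∈ U, divg X q = 0 := by
  -- Step 1: div X = 0 on U₁
  have hzero : ∀ q ∈ U₁, divg X q = 0 := by
    intro q hq
    have hqU := hU₁U hq
    have h1 : (X q).1 * pdx f q + (X q).2 * pdy f q = 0 := by
      rw [hcomb q hq]
      rw [Prod.fst_sum, Prod.snd_sum, Finset.sum_mul, Finset.sum_mul,
        ← Finset.sum_add_distrib]
      apply Finset.sum_eq_zero
      intro i _
      have := hXf0 i q hqU
      simp only [Prod.smul_fst, Prod.smul_snd, smul_eq_mul]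
      calc g i q * (Xs i q).1 * pdx f q + g i q * (Xs i q).2 * pdy f q
          = g i q * ((Xs i q).1 * pdx f q + (Xs i q).2 * pdy f q) := by ring
        _ = 0 := by rw [this, mul_zero]
    have h2 := hintX q hqU
    rw [h1] at h2
    have h3 : f q * divg X q = 0 := by linarith
    rcases mul_eq_zero.mp h3 with h | h
    · exact absurd h (hf0 q hqU)
    · exact h
  -- Step 2: div X is continuous on U
  have hcont : ContinuousOn (divg X) U := by
    have hX' : ContDiffOn ℝ 1 X U := hX.of_le (by simp)
    have hX1 : ContDiffOn ℝ 1 (fun q => (X q).1) U :=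
      (contDiff_fst.comp_contDiffOn hX')
    have hX2 : ContDiffOn ℝ 1 (fun q => (X q).2) U :=
      (contDiff_snd.comp_contDiffOn hX')
    have hd1 := hX1.continuousOn_fderiv_of_isOpen hUo le_rfl
    have hd2 := hX2.continuousOn_fderiv_of_isOpen hUo le_rfl
    exact (hd1.clm_apply continuousOn_const).add (hd2.clm_apply continuousOn_const)
  -- Step 3: extend by density
  intro q hq
  have hqc : q ∈ closure U₁ := hdense hq
  have hnb : (nhdsWithin q U₁).NeBot := mem_closure_iff_nhdsWithin_neBot.mp hqc
  have hca : ContinuousAt (divg X) q := hcont.continuousAt (hUo.mem_nhds hq)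
  have t1 : Filter.Tendsto (divg X) (nhdsWithin q U₁) (nhds (divg X q)) :=
    hca.tendsto.mono_left nhdsWithin_le_nhds
  have t2 : Filter.Tendsto (divg X) (nhdsWithin q U₁) (nhds 0) := by
    apply Filter.Tendsto.congr' _ tendsto_const_nhds
    filter_upwards [self_mem_nhdsWithin] with x hx using (hzero x hx).symm
  exact tendsto_nhds_unique t1 t2

end Stmt3
end

section
/- There is no nonempty open set U ⊆ {(x,y) ∈ ℝ² : y ≠ 0} and smooth nowhere-vanishing function f : U → ℝ satisfying simultaneously ∂f/∂x = 0, y·∂f/∂y + f = 0, and e^x·∂f/∂y = 0 on U. Consequently, the Lie algebra I₁₅ spanned by ∂_x, y∂_y and e^x∂_y is not a Lie algebra of Hamiltonian vector fields with respect to any symplectic form f dx∧dy on any open subset of its domain. -/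
namespace Stmt5

/-- Partial derivative in the x-direction. -/
noncomputable def pdx (f : ℝ × ℝ → ℝ) (p : ℝ × ℝ) : ℝ := fderiv ℝ f p (1, 0)

/-- Partial derivative in the y-direction. -/
noncomputable def pdy (f : ℝ × ℝ → ℝ) (p : ℝ × ℝ) : ℝ := fderiv ℝ f p (0, 1)

/-- There is no nonempty open `U ⊆ {y ≠ 0}` and smooth nowhere-vanishing `f : U → ℝ`
satisfying `∂f/∂x = 0`, `y·∂f/∂y + f = 0` and `eˣ·∂f/∂y = 0` on `U`: the Lie algebra
I₁₅ = ⟨∂ₓ, y∂_y, eˣ∂_y⟩ is not a Lie algebra of Hamiltonian vector fields with respect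
to any symplectic form `f dx∧dy`. -/
theorem stmt_5 : ¬ ∃ (U : Set (ℝ × ℝ)) (f : ℝ × ℝ → ℝ),
    IsOpen U ∧ U.Nonempty ∧ U ⊆ {p : ℝ × ℝ | p.2 ≠ 0} ∧
    ContDiffOn ℝ (⊤ : ℕ∞) f U ∧ (∀ p ∈ U, f p ≠ 0) ∧
    (∀ p ∈ U, pdx f p = 0) ∧ (∀ p ∈ U, p.2 * pdy f p + f p = 0) ∧
    (∀ p ∈ U, Real.exp p.1 * pdy f p = 0) := by
  rintro ⟨U, f, -, ⟨p, hp⟩, -, -, hne, -, h2, h3⟩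
  have hy : pdy f p = 0 := by
    have := h3 p hp
    have he := Real.exp_ne_zero p.1
    exact (mul_eq_zero.mp this).resolve_left he
  have := h2 p hp
  rw [hy, mul_zero, zero_add] at this
  exact hne p hp this

end Stmt5
end

section
/- On U = {(x,y) ∈ ℝ² : y ≠ 0}, the vector fields X₁ = (1,0), X₂ = (x,y), X₃ = (x²−y², 2xy) (the class P₂ ≅ sl(2), arising from planar/complex Riccati equations) are Hamiltonian with respect to the symplectic form ω = y^{−2} dx∧dy with Hamiltonian functions h₁ = −1/y, h₂ = −x/y, h₃ = −(x²+y²)/y, respectively (i.e. ∂h_i/∂x = −y^{−2}·X_i² and ∂h_i/∂y = y^{−2}·X_i¹). Moreover, under the Poisson bracket {g,h}_ω = y²(∂g/∂x·∂h/∂y − ∂g/∂y·∂h/∂x) these satisfy {h₁,h₂}_ω = −h₁, {h₁,h₃}_ω = −2h₂, {h₂,h₃}_ω = −h₃, so ⟨h₁,h₂,h₃⟩ is a Lie algebra isomorphic to sl(2). -/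
/-!
Each hᵢ has the form −P/y with P = 1, x, x² + y². For such a function,
∂ₓ(−P/y) = −Pₓ/y and ∂ᵧ(−P/y) = (P − yPᵧ)/y², so −P/y is a Hamiltonian for y⁻² dx∧dy of the
field (P − yPᵧ, yPₓ), and {−P/y, −Q/y}_ω = (PQₓ − QPₓ)/y + (PₓQᵧ − PᵧQₓ). For the three
polynomials these formulas give exactly X₁, X₂, X₃ and the sl(2) relations.
-/

namespace Stmt7

/-- Partial derivative in the x-direction. -/
noncomputable def pdx (f : ℝ × ℝ → ℝ) (p : ℝ × ℝ) : ℝ := fderiv ℝ f p (1, 0)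

/-- Partial derivative in the y-direction. -/
noncomputable def pdy (f : ℝ × ℝ → ℝ) (p : ℝ × ℝ) : ℝ := fderiv ℝ f p (0, 1)

/-- Poisson bracket induced by ω = y⁻² dx∧dy. -/
noncomputable def pbw (g h : ℝ × ℝ → ℝ) (p : ℝ × ℝ) : ℝ :=
  p.2 ^ 2 * (pdx g p * pdy h p - pdy g p * pdx h p)

/-- Domain: the plane minus the x-axis. -/
def U : Set (ℝ × ℝ) := {p | p.2 ≠ 0}

/-- Basis of the class P₂ ≅ sl(2) (planar/complex Riccati equations). -/
def X1 : ℝ × ℝ → ℝ × ℝ := fun _ => (1, 0)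
def X2 : ℝ × ℝ → ℝ × ℝ := fun p => (p.1, p.2)
def X3 : ℝ × ℝ → ℝ × ℝ := fun p => (p.1 ^ 2 - p.2 ^ 2, 2 * p.1 * p.2)

noncomputable def h1 : ℝ × ℝ → ℝ := fun p => -(1 / p.2)
noncomputable def h2 : ℝ × ℝ → ℝ := fun p => -(p.1 / p.2)
noncomputable def h3 : ℝ × ℝ → ℝ := fun p => -((p.1 ^ 2 + p.2 ^ 2) / p.2)

theorem hasFDerivAt_neg_div_snd {P : ℝ × ℝ → ℝ} {p : ℝ × ℝ} (hP : DifferentiableAt ℝ P p)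
    (hy : p.2 ≠ 0) :
    HasFDerivAt (fun q => -(P q / q.2))
      ((P p / p.2 ^ 2) • ContinuousLinearMap.snd ℝ ℝ ℝ - p.2⁻¹ • fderiv ℝ P p) p := by
  have h := (hP.hasFDerivAt.mul ((hasFDerivAt_inv hy).comp p hasFDerivAt_snd)).neg
  simp only [div_eq_mul_inv]
  refine h.congr_fderiv ?_
  ext <;> simp; ring

theorem pdx_neg_div_snd {P : ℝ × ℝ → ℝ} {p : ℝ × ℝ} (hP : DifferentiableAt ℝ P p)
    (hy : p.2 ≠ 0) : pdx (fun q => -(P q / q.2)) p = -(pdx P p / p.2) := by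
  rw [pdx, pdx, (hasFDerivAt_neg_div_snd hP hy).fderiv]
  simp
  ring

theorem pdy_neg_div_snd {P : ℝ × ℝ → ℝ} {p : ℝ × ℝ} (hP : DifferentiableAt ℝ P p)
    (hy : p.2 ≠ 0) : pdy (fun q => -(P q / q.2)) p = (P p - p.2 * pdy P p) / p.2 ^ 2 := by
  rw [pdy, pdy, (hasFDerivAt_neg_div_snd hP hy).fderiv]
  simp
  field_simp

theorem pbw_neg_div_snd {P Q : ℝ × ℝ → ℝ} {p : ℝ × ℝ} (hP : DifferentiableAt ℝ P p)
    (hQ : DifferentiableAt ℝ Q p) (hy : p.2 ≠ 0) :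
    pbw (fun q => -(P q / q.2)) (fun q => -(Q q / q.2)) p =
      (P p * pdx Q p - Q p * pdx P p) / p.2 + (pdx P p * pdy Q p - pdy P p * pdx Q p) := by
  rw [pbw, pdx_neg_div_snd hP hy, pdy_neg_div_snd hP hy, pdx_neg_div_snd hQ hy,
    pdy_neg_div_snd hQ hy]
  field_simp
  ring

theorem pdx_const (c : ℝ) (p : ℝ × ℝ) : pdx (fun _ => c) p = 0 := by simp [pdx]

theorem pdy_const (c : ℝ) (p : ℝ × ℝ) : pdy (fun _ => c) p = 0 := by simp [pdy]

theorem pdx_fst (p : ℝ × ℝ) : pdx Prod.fst p = 1 := by simp [pdx, fderiv_fst]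

theorem pdy_fst (p : ℝ × ℝ) : pdy Prod.fst p = 0 := by simp [pdy, fderiv_fst]

theorem pdx_sq_add_sq (p : ℝ × ℝ) : pdx (fun q => q.1 ^ 2 + q.2 ^ 2) p = 2 * p.1 := by
  rw [pdx, fderiv_fun_add (by fun_prop) (by fun_prop), fderiv_fun_pow _ (by fun_prop),
    fderiv_fun_pow _ (by fun_prop)]
  simp [fderiv_fst, fderiv_snd]

theorem pdy_sq_add_sq (p : ℝ × ℝ) : pdy (fun q => q.1 ^ 2 + q.2 ^ 2) p = 2 * p.2 := by
  rw [pdy, fderiv_fun_add (by fun_prop) (by fun_prop), fderiv_fun_pow _ (by fun_prop),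
    fderiv_fun_pow _ (by fun_prop)]
  simp [fderiv_fst, fderiv_snd]

theorem hamiltonian_neg_div_snd {P : ℝ × ℝ → ℝ} {X : ℝ × ℝ → ℝ × ℝ} {p : ℝ × ℝ}
    (hP : DifferentiableAt ℝ P p) (hy : p.2 ≠ 0)
    (hX : X p = (P p - p.2 * pdy P p, p.2 * pdx P p)) :
    pdx (fun q => -(P q / q.2)) p = -((p.2 ^ 2)⁻¹ * (X p).2) ∧
      pdy (fun q => -(P q / q.2)) p = (p.2 ^ 2)⁻¹ * (X p).1 := by
  rw [pdx_neg_div_snd hP hy, pdy_neg_div_snd hP hy, hX]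
  constructor <;> field_simp

/-- On {y ≠ 0}, the fields X₁, X₂, X₃ of P₂ ≅ sl(2) are Hamiltonian with respect to
ω = y⁻² dx∧dy with Hamiltonian functions h₁, h₂, h₃, which close sl(2) under the
induced Poisson bracket. -/
theorem stmt_7 : ∀ p ∈ U,
    (pdx h1 p = -((p.2 ^ 2)⁻¹ * (X1 p).2) ∧ pdy h1 p = (p.2 ^ 2)⁻¹ * (X1 p).1) ∧
    (pdx h2 p = -((p.2 ^ 2)⁻¹ * (X2 p).2) ∧ pdy h2 p = (p.2 ^ 2)⁻¹ * (X2 p).1) ∧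
    (pdx h3 p = -((p.2 ^ 2)⁻¹ * (X3 p).2) ∧ pdy h3 p = (p.2 ^ 2)⁻¹ * (X3 p).1) ∧
    pbw h1 h2 p = -h1 p ∧ pbw h1 h3 p = -2 * h2 p ∧ pbw h2 h3 p = -h3 p := by
  rintro p (hy : p.2 ≠ 0)
  have hP1 : DifferentiableAt ℝ (fun _ => (1 : ℝ)) p := differentiableAt_const _
  have hP2 : DifferentiableAt ℝ Prod.fst p := differentiableAt_fst
  have hP3 : DifferentiableAt ℝ (fun q : ℝ × ℝ => q.1 ^ 2 + q.2 ^ 2) p := by fun_prop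
  refine ⟨hamiltonian_neg_div_snd hP1 hy ?_, hamiltonian_neg_div_snd hP2 hy ?_,
    hamiltonian_neg_div_snd hP3 hy ?_, (pbw_neg_div_snd hP1 hP2 hy).trans ?_,
    (pbw_neg_div_snd hP1 hP3 hy).trans ?_, (pbw_neg_div_snd hP2 hP3 hy).trans ?_⟩ <;>
  simp only [X1, X2, X3, h1, h2, h3, pdx_const, pdy_const, pdx_fst, pdy_fst, pdx_sq_add_sq,
    pdy_sq_add_sq, Prod.mk.injEq] <;>
  first | constructor <;> ring | field_simp; ring

end Stmt7
end

section
/- Let λ be a nonzero real number and define φ : U = {(x,y) ∈ ℝ² : y > 0} → ℝ² by φ(x,y) = (λ/y, −λx/y). Then φ is smooth and for every p = (x,y) ∈ U, writing (u,v) = φ(p), the total derivative Dφ(p) satisfies Dφ(p)(1,0) = (0, −u) and Dφ(p)(x², xy) = (v, 0). Thus φ pushes the vector fields ∂_x and x²∂_x + xy∂_y of the Lie algebra I₅ forward to −u∂_v and v∂_u, respectively; hence the Milne–Pinney system with c = 0 (the harmonic oscillator with t-dependent frequency) is locally diffeomorphic to the class I₅. -/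
namespace Stmt12

/-- The map φ(x,y) = (λ/y, −λx/y). -/
noncomputable def φ (l : ℝ) : ℝ × ℝ → ℝ × ℝ :=
  fun p => (l / p.2, -(l * p.1) / p.2)

/-- For λ ≠ 0, the map φ is smooth on {y > 0} and pushes the fields ∂ₓ and
x²∂ₓ + xy∂_y of I₅ forward to −u∂_v and v∂_u, respectively: the Milne–Pinney system
with c = 0 (the t-dependent frequency harmonic oscillator) is locally diffeomorphic
to the class I₅. -/
theorem stmt_12 (l : ℝ) (hl : l ≠ 0) :
    ContDiffOn ℝ (⊤ : ℕ∞) (φ l) {p : ℝ × ℝ | p.2 > 0} ∧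
    ∀ p ∈ {p : ℝ × ℝ | p.2 > 0},
      fderiv ℝ (φ l) p (1, 0) = (0, -(φ l p).1) ∧
      fderiv ℝ (φ l) p (p.1 ^ 2, p.1 * p.2) = ((φ l p).2, 0) := by
  constructor
  · apply ContDiffOn.prodMk
    · exact contDiffOn_const.div contDiff_snd.contDiffOn (fun p hp => ne_of_gt hp)
    · exact ((contDiff_const.mul contDiff_fst).neg.contDiffOn).div
        contDiff_snd.contDiffOn (fun p hp => ne_of_gt hp)
  · intro p hp
    have hy : p.2 ≠ 0 := ne_of_gt hp
    have hinv : HasFDerivAt (fun q : ℝ × ℝ => (q.2)⁻¹)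
        ((ContinuousLinearMap.smulRight (1 : ℝ →L[ℝ] ℝ) (-(p.2 ^ 2)⁻¹)).comp
          (ContinuousLinearMap.snd ℝ ℝ ℝ)) p :=
      (hasFDerivAt_inv hy).comp p hasFDerivAt_snd
    have hf1 : HasFDerivAt (fun q : ℝ × ℝ => l / q.2)
        (l • ((ContinuousLinearMap.smulRight (1 : ℝ →L[ℝ] ℝ) (-(p.2 ^ 2)⁻¹)).comp
          (ContinuousLinearMap.snd ℝ ℝ ℝ))) p := by
      simpa [div_eq_mul_inv] using hinv.const_mul l
    have h1 : HasFDerivAt (fun q : ℝ × ℝ => -l * q.1)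
        ((-l) • ContinuousLinearMap.fst ℝ ℝ ℝ) p := by
      exact (hasFDerivAt_fst : HasFDerivAt (Prod.fst : ℝ × ℝ → ℝ) (ContinuousLinearMap.fst ℝ ℝ ℝ) p).const_mul (-l)
    have hf2 : HasFDerivAt (fun q : ℝ × ℝ => -(l * q.1) / q.2)
        (-((l * p.1) • ((ContinuousLinearMap.smulRight (1 : ℝ →L[ℝ] ℝ) (-(p.2 ^ 2)⁻¹)).comp
            (ContinuousLinearMap.snd ℝ ℝ ℝ)))
          + p.2⁻¹ • ((-l) • ContinuousLinearMap.fst ℝ ℝ ℝ)) p := by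
      simpa [div_eq_mul_inv, neg_mul, Pi.mul_def] using h1.mul hinv
    have hP : HasFDerivAt (φ l) _ p := hf1.prodMk hf2
    have hd := hP.fderiv
    rw [hd]
    refine ⟨?_, ?_⟩ <;>
      · simp only [ContinuousLinearMap.prod_apply, ContinuousLinearMap.add_apply, ContinuousLinearMap.neg_apply,
          ContinuousLinearMap.smul_apply, ContinuousLinearMap.comp_apply,
          ContinuousLinearMap.smulRight_apply, ContinuousLinearMap.coe_fst',
          ContinuousLinearMap.coe_snd', ContinuousLinearMap.one_apply, smul_eq_mul, φ,
          Prod.ext_iff]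
        constructor <;> field_simp <;> ring
end Stmt12
end

section
/- Let c < 0 and let λ be a nonzero real number with 4λ² = −1/c. Define φ : U = {(x,y) ∈ ℝ² : x > y} → ℝ² by φ(x,y) = (λ(x−y), λ(x²−y²)). Then φ is smooth and for every p = (x,y) ∈ U, writing (u,v) = φ(p) (note u ≠ 0 on U), the total derivative Dφ(p) satisfies Dφ(p)(1,1) = (0, 2u) and Dφ(p)(x²,y²) = (v, 3v²/(2u) − 2c·u³). Thus φ pushes the vector fields ∂_x+∂_y and x²∂_x+y²∂_y of the Lie algebra I₄ forward to 2u∂_v and v∂_u + (3v²/(2u) − 2cu³)∂_v, respectively; hence for c < 0 the second-order Kummer–Schwarz system is locally diffeomorphic to the class I₄. -/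
namespace Stmt13

/-- The map φ(x,y) = (λ(x−y), λ(x²−y²)). -/
noncomputable def φ (l : ℝ) : ℝ × ℝ → ℝ × ℝ :=
  fun p => (l * (p.1 - p.2), l * (p.1 ^ 2 - p.2 ^ 2))

/-- For c < 0 and λ ≠ 0 with 4λ² = −1/c, the map φ is smooth on {x > y} (where u ≠ 0)
and pushes the fields ∂ₓ+∂_y and x²∂ₓ+y²∂_y of I₄ forward to 2u∂_v and
v∂_u + (3v²/(2u) − 2cu³)∂_v: for c < 0 the second-order Kummer–Schwarz system is
locally diffeomorphic to the class I₄. -/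
theorem stmt_13 (c l : ℝ) (hc : c < 0) (hl : l ≠ 0) (hlc : 4 * l ^ 2 = -1 / c) :
    ContDiffOn ℝ (⊤ : ℕ∞) (φ l) {p : ℝ × ℝ | p.1 > p.2} ∧
    ∀ p ∈ {p : ℝ × ℝ | p.1 > p.2},
      (φ l p).1 ≠ 0 ∧
      fderiv ℝ (φ l) p (1, 1) = (0, 2 * (φ l p).1) ∧
      fderiv ℝ (φ l) p (p.1 ^ 2, p.2 ^ 2) =
        ((φ l p).2, 3 * (φ l p).2 ^ 2 / (2 * (φ l p).1) - 2 * c * (φ l p).1 ^ 3) := by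
  constructor
  · apply ContDiff.contDiffOn
    apply ContDiff.prodMk
    · exact contDiff_const.mul (contDiff_fst.sub contDiff_snd)
    · exact contDiff_const.mul ((contDiff_fst.pow 2).sub (contDiff_snd.pow 2))
  · intro p hp
    have hp' : p.1 > p.2 := hp
    have hD1 : HasFDerivAt (fun p : ℝ × ℝ => l * (p.1 - p.2))
        (l • ((ContinuousLinearMap.fst ℝ ℝ ℝ) - (ContinuousLinearMap.snd ℝ ℝ ℝ))) p :=
      (hasFDerivAt_fst.sub hasFDerivAt_snd).const_mul l
    have heq : (fun p : ℝ × ℝ => l * (p.1 ^ 2 - p.2 ^ 2))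
        = fun p : ℝ × ℝ => l * (p.1 * p.1 - p.2 * p.2) := by
      funext q; ring
    have hD2 : HasFDerivAt (fun p : ℝ × ℝ => l * (p.1 ^ 2 - p.2 ^ 2))
        (l • ((p.1 • (ContinuousLinearMap.fst ℝ ℝ ℝ) + p.1 • (ContinuousLinearMap.fst ℝ ℝ ℝ))
          - (p.2 • (ContinuousLinearMap.snd ℝ ℝ ℝ) + p.2 • (ContinuousLinearMap.snd ℝ ℝ ℝ)))) p := by
      rw [heq]
      exact ((hasFDerivAt_fst.mul hasFDerivAt_fst).sub
        (hasFDerivAt_snd.mul hasFDerivAt_snd)).const_mul l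
    have hD : HasFDerivAt (φ l)
        ((l • ((ContinuousLinearMap.fst ℝ ℝ ℝ) - (ContinuousLinearMap.snd ℝ ℝ ℝ))).prod
          (l • ((p.1 • (ContinuousLinearMap.fst ℝ ℝ ℝ) + p.1 • (ContinuousLinearMap.fst ℝ ℝ ℝ))
            - (p.2 • (ContinuousLinearMap.snd ℝ ℝ ℝ) + p.2 • (ContinuousLinearMap.snd ℝ ℝ ℝ))))) p := hD1.prodMk hD2
    have hu : (φ l p).1 ≠ 0 := by
      simp only [φ]
      exact mul_ne_zero hl (sub_ne_zero.mpr (ne_of_gt hp'))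
    have hcne : c ≠ 0 := ne_of_lt hc
    have hc' : c * (4 * l ^ 2) = -1 := by
      field_simp at hlc
      linarith [hlc]
    refine ⟨hu, ?_, ?_⟩
    · rw [hD.fderiv]
      simp [φ, ContinuousLinearMap.prod_apply]
      ring
    · rw [hD.fderiv]
      simp only [φ, ContinuousLinearMap.prod_apply, ContinuousLinearMap.smul_apply,
        ContinuousLinearMap.sub_apply, ContinuousLinearMap.add_apply,
        ContinuousLinearMap.coe_fst', ContinuousLinearMap.coe_snd',
        smul_eq_mul, Prod.mk.injEq]
      constructor
      · trivial
      · have hx : l * (p.1 - p.2) ≠ 0 := hu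
        have hne : p.1 - p.2 ≠ 0 := sub_ne_zero.mpr (ne_of_gt hp')
        field_simp
        ring_nf
        linear_combination ((p.1 - p.2) ^ 4) * hc'


end Stmt13
end

section
/- Let c > 0 and λ = c^{1/4}. Define φ : U = {(x,y) ∈ ℝ² : y > 0} → ℝ² by φ(x,y) = (λ·y^{−1/2}, −λx·y^{−1/2}). Then φ is smooth and for every p = (x,y) ∈ U, writing (u,v) = φ(p), the total derivative Dφ(p) satisfies Dφ(p)(1,0) = (0, −u) and Dφ(p)(x²−y², 2xy) = (v, c/u³). Thus φ pushes the vector fields ∂_x and (x²−y²)∂_x + 2xy∂_y of the planar Riccati system (class P₂) forward to −u∂_v and v∂_u + (c/u³)∂_v of the Milne–Pinney system with parameter c; hence planar (complex) Riccati equations with t-dependent real coefficients are locally diffeomorphic to the Milne–Pinney system with c > 0. -/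
namespace Stmt15

/-- The map φ(x,y) = (λ·y^{-1/2}, −λx·y^{-1/2}). -/
noncomputable def φ (l : ℝ) : ℝ × ℝ → ℝ × ℝ :=
  fun p => (l / Real.sqrt p.2, -(l * p.1) / Real.sqrt p.2)

/-- For c > 0 and λ = c^{1/4}, the map φ is smooth on {y > 0} and pushes the fields ∂ₓ
and (x²−y²)∂ₓ + 2xy∂_y of the planar Riccati system (class P₂) forward to −u∂_v and
v∂_u + (c/u³)∂_v of the Milne–Pinney system with parameter c: planar (complex) Riccati
equations are locally diffeomorphic to the Milne–Pinney system with c > 0. -/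
theorem stmt_15 (c l : ℝ) (hc : c > 0) (hl : l = c ^ ((1 : ℝ) / 4)) :
    ContDiffOn ℝ (⊤ : ℕ∞) (φ l) {p : ℝ × ℝ | p.2 > 0} ∧
    ∀ p ∈ {p : ℝ × ℝ | p.2 > 0},
      fderiv ℝ (φ l) p (1, 0) = (0, -(φ l p).1) ∧
      fderiv ℝ (φ l) p (p.1 ^ 2 - p.2 ^ 2, 2 * p.1 * p.2) =
        ((φ l p).2, c / (φ l p).1 ^ 3) := by
  have hl4 : l ^ 4 = c := by
    rw [hl, ← Real.rpow_natCast (c ^ ((1:ℝ)/4)) 4, ← Real.rpow_mul hc.le]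
    norm_num
  have hlpos : 0 < l := by rw [hl]; positivity
  have hsq : ContDiffOn ℝ (⊤ : ℕ∞) (fun q : ℝ × ℝ => Real.sqrt q.2) {p : ℝ × ℝ | p.2 > 0} :=
    fun q hq => ((Real.contDiffAt_sqrt (ne_of_gt hq)).comp q contDiff_snd.contDiffAt).contDiffWithinAt
  have hne : ∀ q ∈ {p : ℝ × ℝ | p.2 > 0}, Real.sqrt q.2 ≠ 0 :=
    fun q hq => (Real.sqrt_pos.mpr hq).ne'
  constructor
  · exact ContDiffOn.prodMk (contDiffOn_const.div hsq hne)
      ((((contDiff_const.mul contDiff_fst).neg).contDiffOn).div hsq hne)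
  · intro p hp
    have hy : (0:ℝ) < p.2 := hp
    have hs : 0 < Real.sqrt p.2 := Real.sqrt_pos.mpr hy
    -- first component
    have hg1 : HasDerivAt (fun y : ℝ => l / Real.sqrt y)
        ((0 * Real.sqrt p.2 - l * (1 / (2 * Real.sqrt p.2))) / Real.sqrt p.2 ^ 2) p.2 :=
      (hasDerivAt_const p.2 l).div (Real.hasDerivAt_sqrt hy.ne') hs.ne'
    have hf1 : HasFDerivAt (fun q : ℝ × ℝ => l / Real.sqrt q.2) _ p :=
      (hg1.hasFDerivAt).comp p hasFDerivAt_snd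
    -- second component
    have hg2 : HasDerivAt (fun y : ℝ => -l / Real.sqrt y)
        ((0 * Real.sqrt p.2 - -l * (1 / (2 * Real.sqrt p.2))) / Real.sqrt p.2 ^ 2) p.2 :=
      (hasDerivAt_const p.2 (-l)).div (Real.hasDerivAt_sqrt hy.ne') hs.ne'
    have hg2f : HasFDerivAt (fun q : ℝ × ℝ => -l / Real.sqrt q.2) _ p :=
      (hg2.hasFDerivAt).comp p hasFDerivAt_snd
    have hf2' : HasFDerivAt (fun q : ℝ × ℝ => q.1 * (-l / Real.sqrt q.2)) _ p :=
      (hasFDerivAt_fst (𝕜 := ℝ) (p := p)).mul hg2f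
    have hfun : (fun q : ℝ × ℝ => q.1 * (-l / Real.sqrt q.2))
        = (fun q : ℝ × ℝ => -(l * q.1) / Real.sqrt q.2) := by
      funext q; ring
    rw [hfun] at hf2'
    have H : HasFDerivAt (φ l) _ p := hf1.prodMk hf2'
    rw [H.fderiv]
    set s := Real.sqrt p.2 with hsd
    have hs2 : s ^ 2 = p.2 := Real.sq_sqrt hy.le
    constructor
    · simp only [ContinuousLinearMap.prod_apply, ContinuousLinearMap.add_apply,
        ContinuousLinearMap.smul_apply, ContinuousLinearMap.comp_apply,
        ContinuousLinearMap.smulRight_apply, ContinuousLinearMap.one_apply,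
        ContinuousLinearMap.coe_fst', ContinuousLinearMap.coe_snd', smul_eq_mul, φ,
        Prod.mk.injEq, ContinuousLinearMap.toSpanSingleton_apply, ← hsd]
      constructor <;> field_simp <;> ring
    · simp only [ContinuousLinearMap.prod_apply, ContinuousLinearMap.add_apply,
        ContinuousLinearMap.smul_apply, ContinuousLinearMap.comp_apply,
        ContinuousLinearMap.smulRight_apply, ContinuousLinearMap.one_apply,
        ContinuousLinearMap.coe_fst', ContinuousLinearMap.coe_snd', smul_eq_mul, φ,
        Prod.mk.injEq, ContinuousLinearMap.toSpanSingleton_apply, ← hsd]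
      rw [← hl4, ← hs2]
      constructor <;> field_simp <;> ring


end Stmt15
end

section
/- Every Lie subalgebra (over ℝ) of the Lie algebra of smooth vector fields on ℝ² that contains the vector fields X₁ = x²∂_x and X₂ = xy∂_x is infinite-dimensional as a real vector space. More precisely, setting Y₀ = X₁ and Y_{n+1} = [X₂, Y_n], one has Y_n = x²yⁿ∂_x for all n ≥ 0, and the vector fields {x²yⁿ∂_x : n ∈ ℕ} are linearly independent over ℝ. Consequently, the predator–prey system dx/dt = b(t)x + c(t)y + d(t)x² + e(t)xy + f(t)y², dy/dt = y with non-constant, non-proportional d(t), e(t) is in general not a Lie system. -/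
/-!
Brackets of fields `g ∂ₓ` and `f ∂ₓ` only see `x`-derivatives:
`[xy ∂ₓ, x²yⁿ ∂ₓ] = (xy · 2xyⁿ - x²yⁿ · y) ∂ₓ = x²yⁿ⁺¹ ∂ₓ`.
Restricted to the line `x = 1`, the field `x²yⁿ ∂ₓ` becomes the monomial `tⁿ`, and monomial
functions on an infinite domain are linearly independent because a nonzero polynomial has
finitely many roots. A bracket-closed subspace containing `X₁` and `X₂` contains every `Yₙ`,
hence an infinite linearly independent family.
-/

namespace Stmt18

/-- Lie bracket of planar vector fields: [X,Y](p) = DY(p)·X(p) − DX(p)·Y(p). -/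
noncomputable def lb (X Y : ℝ × ℝ → ℝ × ℝ) : ℝ × ℝ → ℝ × ℝ :=
  fun p => fderiv ℝ Y p (X p) - fderiv ℝ X p (Y p)

/-- X₁ = x²∂ₓ. -/
def X1 : ℝ × ℝ → ℝ × ℝ := fun p => (p.1 ^ 2, 0)

/-- X₂ = xy∂ₓ. -/
def X2 : ℝ × ℝ → ℝ × ℝ := fun p => (p.1 * p.2, 0)

/-- Y₀ = X₁ and Y_{n+1} = [X₂, Y_n]. -/
noncomputable def Yseq : ℕ → (ℝ × ℝ → ℝ × ℝ)
  | 0 => X1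
  | n + 1 => lb X2 (Yseq n)

open Polynomial in
theorem linearIndependent_pow_fun (R : Type*) [CommRing R] [IsDomain R] [Infinite R] :
    LinearIndependent R (fun (n : ℕ) (t : R) => t ^ n) := by
  let evalFun : R[X] →ₗ[R] (R → R) := LinearMap.pi leval
  have hinj : LinearMap.ker evalFun = ⊥ :=
    LinearMap.ker_eq_bot.mpr fun p q hpq => Polynomial.funext (congrFun hpq)
  have hpow : (fun (n : ℕ) (t : R) => t ^ n) = evalFun ∘ basisMonomials R := by
    ext n t
    simp [evalFun]
  rw [hpow]
  exact (basisMonomials R).linearIndependent.map' evalFun hinj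

theorem lb_xField_apply {f g : ℝ × ℝ → ℝ} {f' g' : ℝ × ℝ →L[ℝ] ℝ} {p : ℝ × ℝ}
    (hg : HasFDerivAt g g' p) (hf : HasFDerivAt f f' p) :
    lb (fun q => (g q, 0)) (fun q => (f q, 0)) p =
      (g p * f' (1, 0) - f p * g' (1, 0), 0) := by
  rw [lb, (hf.prodMk (hasFDerivAt_const 0 p)).fderiv,
    (hg.prodMk (hasFDerivAt_const 0 p)).fderiv]
  have hx : ∀ (a : ℝ) (h : ℝ × ℝ →L[ℝ] ℝ), h (a, 0) = a * h (1, 0) := fun a h => by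
    rw [← smul_eq_mul, ← h.map_smul, Prod.smul_mk, smul_eq_mul, mul_one, smul_zero]
  simp only [ContinuousLinearMap.prod_apply, zero_apply, Prod.mk_sub_mk,
    hx (g p), hx (f p), mul_zero, sub_zero]

theorem Yseq_eq (n : ℕ) : Yseq n = fun p => (p.1 ^ 2 * p.2 ^ n, 0) := by
  induction n with
  | zero => funext p; simp [Yseq, X1]
  | succ n ih =>
    funext p
    have hX2 : HasFDerivAt (fun q : ℝ × ℝ => q.1 * q.2) _ p :=
      (hasFDerivAt_fst (𝕜 := ℝ) (p := p)).mul (hasFDerivAt_snd (p := p))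
    have hYn : HasFDerivAt (fun q : ℝ × ℝ => q.1 ^ 2 * q.2 ^ n) _ p :=
      ((hasFDerivAt_fst (𝕜 := ℝ) (p := p)).pow 2).mul ((hasFDerivAt_snd (p := p)).pow n)
    rw [Yseq, ih]
    unfold X2
    rw [lb_xField_apply hX2 hYn]
    simp only [nsmul_eq_mul, Nat.add_one_sub_one, pow_one, Nat.cast_ofNat, add_apply, smul_apply,
      ContinuousLinearMap.coe_fst', ContinuousLinearMap.coe_snd', smul_eq_mul, mul_zero, mul_one,
      zero_add, Prod.mk.injEq, and_true]
    ring

theorem linearIndependent_x_sq_mul_y_pow :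
    LinearIndependent ℝ (fun (n : ℕ) => (fun p => (p.1 ^ 2 * p.2 ^ n, 0) : ℝ × ℝ → ℝ × ℝ)) := by
  let restrict : (ℝ × ℝ → ℝ × ℝ) →ₗ[ℝ] (ℝ → ℝ) :=
    { toFun := fun X t => (X (1, t)).1
      map_add' := fun _ _ => rfl
      map_smul' := fun _ _ => rfl }
  have hrestrict : restrict ∘ (fun n p => (p.1 ^ 2 * p.2 ^ n, 0)) = fun n t => t ^ n := by
    ext n t
    simp [restrict]
  exact LinearIndependent.of_comp restrict (hrestrict ▸ linearIndependent_pow_fun ℝ)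

theorem Yseq_mem {W : Submodule ℝ (ℝ × ℝ → ℝ × ℝ)} (hW : ∀ A ∈ W, ∀ B ∈ W, lb A B ∈ W)
    (h1 : X1 ∈ W) (h2 : X2 ∈ W) (n : ℕ) : Yseq n ∈ W := by
  induction n with
  | zero => exact h1
  | succ n ih => exact hW _ h2 _ ih

/-- One has Y_n = x²yⁿ∂ₓ for all n, the vector fields x²yⁿ∂ₓ are linearly independent
over ℝ, and consequently every Lie subalgebra of the smooth vector fields on ℝ²
containing X₁ = x²∂ₓ and X₂ = xy∂ₓ is infinite-dimensional: the corresponding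
predator–prey system is in general not a Lie system. -/
theorem stmt_18 :
    (∀ n : ℕ, Yseq n = fun p => (p.1 ^ 2 * p.2 ^ n, 0)) ∧
    LinearIndependent ℝ (fun (n : ℕ) => (fun p => (p.1 ^ 2 * p.2 ^ n, 0) :
      ℝ × ℝ → ℝ × ℝ)) ∧
    ∀ W : Submodule ℝ (ℝ × ℝ → ℝ × ℝ),
      (∀ A ∈ W, ∀ B ∈ W, lb A B ∈ W) → X1 ∈ W → X2 ∈ W →
        ¬ FiniteDimensional ℝ W := by
  refine ⟨Yseq_eq, linearIndependent_x_sq_mul_y_pow, fun W hW h1 h2 hfin => ?_⟩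
  have hY : LinearIndependent ℝ Yseq := funext Yseq_eq ▸ linearIndependent_x_sq_mul_y_pow
  have hli : LinearIndependent ℝ (fun n => (⟨Yseq n, Yseq_mem hW h1 h2 n⟩ : W)) :=
    LinearIndependent.of_comp W.subtype hY
  exact Module.Finite.not_linearIndependent_of_infinite _ hli

end Stmt18
end

section
/- On U = {(x,y) ∈ ℝ² : x > 0, y > 0}, the vector fields X₁ = (x,0), X₂ = (0,−y), X₃ = (0,xy) of the viral infection model dх/dt = (α(t)−δ)x, dy/dt = β(t)xy − γ(t)y are Hamiltonian with respect to the symplectic form ω = (xy)^{−1} dx∧dy with Hamiltonian functions h₁ = ln y, h₂ = ln x, h₃ = −x, respectively (i.e. ∂h_i/∂x = −(xy)^{−1}·X_i² and ∂h_i/∂y = (xy)^{−1}·X_i¹). Moreover, under the Poisson bracket {g,h}_ω = xy(∂g/∂x·∂h/∂y − ∂g/∂y·∂h/∂x) these satisfy {h₁,h₂}_ω = −1, {h₁,h₃}_ω = −h₃, {h₂,h₃}_ω = 0, so ⟨h₁,h₂,h₃,1⟩ is closed under the Poisson bracket (a centrally extended Lie algebra ℝ⋉ℝ², class I₁₄B);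 hence the viral infection model with constant infection power is a Lie–Hamilton system. -/
/-! Each of h₁ = ln y, h₂ = ln x, h₃ = −x depends on a single coordinate, so its partial
derivatives are one-variable derivatives; once these are known, the Hamiltonian equations and
the three brackets are identities between rational functions of x, y > 0. -/

namespace Stmt19

/-- Partial derivative in the x-direction. -/
noncomputable def pdx (f : ℝ × ℝ → ℝ) (p : ℝ × ℝ) : ℝ := fderiv ℝ f p (1, 0)

/-- Partial derivative in the y-direction. -/
noncomputable def pdy (f : ℝ × ℝ → ℝ) (p : ℝ × ℝ) : ℝ := fderiv ℝ f p (0, 1)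

/-- Poisson bracket induced by ω = (xy)⁻¹ dx∧dy. -/
noncomputable def pbw (g h : ℝ × ℝ → ℝ) (p : ℝ × ℝ) : ℝ :=
  p.1 * p.2 * (pdx g p * pdy h p - pdy g p * pdx h p)

/-- Domain: the open first quadrant. -/
def U : Set (ℝ × ℝ) := {p | 0 < p.1 ∧ 0 < p.2}

/-- Vector fields of the viral infection model with constant infection power. -/
def X1 : ℝ × ℝ → ℝ × ℝ := fun p => (p.1, 0)
def X2 : ℝ × ℝ → ℝ × ℝ := fun p => (0, -p.2)
def X3 : ℝ × ℝ → ℝ × ℝ := fun p => (0, p.1 * p.2)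

noncomputable def h1 : ℝ × ℝ → ℝ := fun p => Real.log p.2
noncomputable def h2 : ℝ × ℝ → ℝ := fun p => Real.log p.1
noncomputable def h3 : ℝ × ℝ → ℝ := fun p => -p.1

section OneVariable

variable {f : ℝ → ℝ} {f' : ℝ} {p : ℝ × ℝ}

theorem fderiv_comp_fst (hf : HasDerivAt f f' p.1) :
    fderiv ℝ (fun q => f q.1) p = f' • ContinuousLinearMap.fst ℝ ℝ ℝ :=
  (hf.comp_hasFDerivAt p hasFDerivAt_fst).fderiv

theorem fderiv_comp_snd (hf : HasDerivAt f f' p.2) :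
    fderiv ℝ (fun q => f q.2) p = f' • ContinuousLinearMap.snd ℝ ℝ ℝ :=
  (hf.comp_hasFDerivAt p hasFDerivAt_snd).fderiv

theorem pdx_comp_fst (hf : HasDerivAt f f' p.1) : pdx (fun q => f q.1) p = f' := by
  simp [pdx, fderiv_comp_fst hf]

theorem pdy_comp_fst (hf : HasDerivAt f f' p.1) : pdy (fun q => f q.1) p = 0 := by
  simp [pdy, fderiv_comp_fst hf]

theorem pdx_comp_snd (hf : HasDerivAt f f' p.2) : pdx (fun q => f q.2) p = 0 := by
  simp [pdx, fderiv_comp_snd hf]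

theorem pdy_comp_snd (hf : HasDerivAt f f' p.2) : pdy (fun q => f q.2) p = f' := by
  simp [pdy, fderiv_comp_snd hf]

end OneVariable

/-- On {x > 0, y > 0}, the fields X₁ = x∂ₓ, X₂ = −y∂_y, X₃ = xy∂_y of the viral infection
model are Hamiltonian with respect to ω = (xy)⁻¹ dx∧dy with Hamiltonian functions
h₁ = ln y, h₂ = ln x, h₃ = −x, which together with 1 close a centrally extended Lie
algebra ℝ⋉ℝ² (class I₁₄B) under the induced Poisson bracket: hence the model is a
Lie–Hamilton system. -/
theorem stmt_19 : ∀ p ∈ U,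
    (pdx h1 p = -((p.1 * p.2)⁻¹ * (X1 p).2) ∧ pdy h1 p = (p.1 * p.2)⁻¹ * (X1 p).1) ∧
    (pdx h2 p = -((p.1 * p.2)⁻¹ * (X2 p).2) ∧ pdy h2 p = (p.1 * p.2)⁻¹ * (X2 p).1) ∧
    (pdx h3 p = -((p.1 * p.2)⁻¹ * (X3 p).2) ∧ pdy h3 p = (p.1 * p.2)⁻¹ * (X3 p).1) ∧
    pbw h1 h2 p = -1 ∧ pbw h1 h3 p = -h3 p ∧ pbw h2 h3 p = 0 := by
  rintro p ⟨hx, hy⟩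
  have hlog_y := Real.hasDerivAt_log hy.ne'
  have hlog_x := Real.hasDerivAt_log hx.ne'
  have hneg := (hasDerivAt_id p.1).neg
  have h1x : pdx h1 p = 0 := pdx_comp_snd hlog_y
  have h1y : pdy h1 p = p.2⁻¹ := pdy_comp_snd hlog_y
  have h2x : pdx h2 p = p.1⁻¹ := pdx_comp_fst hlog_x
  have h2y : pdy h2 p = 0 := pdy_comp_fst hlog_x
  have h3x : pdx h3 p = -1 := pdx_comp_fst hneg
  have h3y : pdy h3 p = 0 := pdy_comp_fst hneg
  simp only [pbw, X1, X2, X3, h3, h1x, h1y, h2x, h2y, h3x, h3y]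
  refine ⟨⟨?_, ?_⟩, ⟨?_, ?_⟩, ⟨?_, ?_⟩, ?_, ?_, ?_⟩ <;> field_simp <;> ring

end Stmt19
end
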